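/- Let R₀, R₁, …, R_T be a sequence of m×n matrices over 𝔽₂ such that for every t < T, R_{t+1} is obtained from R_t by a collision-resolving addition. Then T ≤ m·n. (Any reduction by collision-resolving column additions terminates after at most m·n operations, since each operation either zeroes a column or strictly decreases its low.) -/

import Mathlib

/-!
Each collision-resolving addition leaves every column but one unchanged and strictly lowers
the low of the modified column: over `𝔽₂` the two equal pivots cancel and every other nonzero
entry of the sum lies above them. Encoding a zero column as `0` and a low `i` as `i + 1`, the
sum of these values over all columns is a natural number at most `m * n` that drops at every
step, so there are at most `m * n` steps.
-/

open Matrix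

/-- The `low` of column `j` of `R`: the largest row index `i` with `R i j ≠ 0`,
or `⊥` if the column is zero. -/
def low {m n : ℕ} (R : Matrix (Fin m) (Fin n) (ZMod 2)) (j : Fin n) : WithBot (Fin m) :=
  (Finset.univ.filter fun i => R i j ≠ 0).max

/-- `R` is reduced if no two distinct nonzero columns have equal lows. -/
def Reduced {m n : ℕ} (R : Matrix (Fin m) (Fin n) (ZMod 2)) : Prop :=
  ∀ j₁ j₂ : Fin n, low R j₁ ≠ ⊥ → low R j₁ = low R j₂ → j₁ = j₂

/-- A square matrix is upper triangular if `V i j = 0` whenever `i > j`. -/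
def UpperTri {k : ℕ} (V : Matrix (Fin k) (Fin k) (ZMod 2)) : Prop :=
  ∀ i j : Fin k, j < i → V i j = 0

/-- A collision-resolving addition: column `i` of `R` is replaced by
(column `i`) + (column `j`) for some `j < i` with both columns nonzero and
`low R j = low R i`. -/
def CollStep {m n : ℕ} (R R' : Matrix (Fin m) (Fin n) (ZMod 2)) : Prop :=
  ∃ i j : Fin n, j < i ∧ low R j ≠ ⊥ ∧ low R i ≠ ⊥ ∧ low R j = low R i ∧
    R' = R.updateCol i (fun k => R k i + R k j)

open Finset

def lowValue {m : ℕ} (x : WithBot (Fin m)) : ℕ :=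
  WithBot.recBotCoe 0 (fun i => i.val + 1) x

lemma lowValue_strictMono {m : ℕ} : StrictMono (lowValue (m := m)) := by
  intro x y hxy
  induction y using WithBot.recBotCoe with
  | bot => exact absurd hxy not_lt_bot
  | coe b =>
    induction x using WithBot.recBotCoe with
    | bot => simp [lowValue]
    | coe a => simpa [lowValue] using WithBot.coe_lt_coe.mp hxy

lemma lowValue_le {m : ℕ} (x : WithBot (Fin m)) : lowValue x ≤ m := by
  induction x using WithBot.recBotCoe with
  | bot => exact Nat.zero_le m
  | coe a => exact a.isLt

def lowPotential {m n : ℕ} (R : Matrix (Fin m) (Fin n) (ZMod 2)) : ℕ :=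
  ∑ j, lowValue (low R j)

lemma lowPotential_le {m n : ℕ} (R : Matrix (Fin m) (Fin n) (ZMod 2)) :
    lowPotential R ≤ m * n :=
  calc lowPotential R ≤ ∑ _j : Fin n, m := sum_le_sum fun j _ => lowValue_le _
    _ = m * n := by simp [mul_comm]

lemma le_low_of_ne_zero {m n : ℕ} {R : Matrix (Fin m) (Fin n) (ZMod 2)} {k : Fin m}
    {j : Fin n} (h : R k j ≠ 0) : (k : WithBot (Fin m)) ≤ low R j :=
  le_max (mem_filter.mpr ⟨mem_univ k, h⟩)

lemma low_updateCol_ne {m n : ℕ} (R : Matrix (Fin m) (Fin n) (ZMod 2)) {i j : Fin n}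
    (c : Fin m → ZMod 2) (hji : j ≠ i) : low (R.updateCol i c) j = low R j := by
  simp only [low, Matrix.updateCol_ne hji]

lemma low_updateCol_add_lt {m n : ℕ} (R : Matrix (Fin m) (Fin n) (ZMod 2)) {i j : Fin n}
    (hi : low R i ≠ ⊥) (hlow : low R j = low R i) :
    low (R.updateCol i fun k => R k i + R k j) i < low R i := by
  obtain ⟨l, hl⟩ := WithBot.ne_bot_iff_exists.mp hi
  have hli : R l i ≠ 0 := (mem_filter.mp (mem_of_max hl.symm)).2
  have hlj : R l j ≠ 0 := (mem_filter.mp (mem_of_max (hlow.trans hl.symm))).2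
  have cancel : ∀ a b : ZMod 2, a ≠ 0 → b ≠ 0 → a + b = 0 := by decide
  rw [← hl, low, max_eq_sup_coe, Finset.sup_lt_iff (WithBot.bot_lt_coe l)]
  intro k hk
  replace hk : R k i + R k j ≠ 0 := by simpa using hk
  have hkl : k ≤ l := by
    by_cases hki : R k i = 0
    · have hkj : R k j ≠ 0 := by simpa [hki] using hk
      exact WithBot.coe_le_coe.mp (hl ▸ hlow ▸ le_low_of_ne_zero hkj)
    · exact WithBot.coe_le_coe.mp (hl ▸ le_low_of_ne_zero hki)
  refine WithBot.coe_lt_coe.mpr (lt_of_le_of_ne hkl ?_)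
  rintro rfl
  exact hk (cancel _ _ hli hlj)

lemma CollStep.lowPotential_lt {m n : ℕ} {R R' : Matrix (Fin m) (Fin n) (ZMod 2)}
    (h : CollStep R R') : lowPotential R' < lowPotential R := by
  obtain ⟨i, j, -, -, hi, hlow, rfl⟩ := h
  have hdrop := lowValue_strictMono (low_updateCol_add_lt R hi hlow)
  refine sum_lt_sum (fun j' _ => ?_) ⟨i, mem_univ i, hdrop⟩
  by_cases hj' : j' = i
  · exact hj' ▸ hdrop.le
  · rw [low_updateCol_ne R _ hj']

lemma apply_add_le_of_forall_succ_lt {f : ℕ → ℕ} {T : ℕ} (h : ∀ t < T, f (t + 1) < f t) :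
    f T + T ≤ f 0 := by
  induction T with
  | zero => simp
  | succ T ih =>
    have := ih fun t ht => h t (Nat.lt_succ_of_lt ht)
    have := h T (Nat.lt_succ_self T)
    omega

/-- any sequence of collision-resolving additions has length at most `m * n`. -/
theorem stmt_7 {m n T : ℕ} (R : ℕ → Matrix (Fin m) (Fin n) (ZMod 2))
    (h : ∀ t < T, CollStep (R t) (R (t + 1))) : T ≤ m * n := by
  have hdescent : lowPotential (R T) + T ≤ lowPotential (R 0) :=
    apply_add_le_of_forall_succ_lt (f := fun t => lowPotential (R t))
      fun t ht => (h t ht).lowPotential_lt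
  have := lowPotential_le (R 0)
  omega
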